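/- In the greedy coloring of the cover graph of a uniquely generated finite poset along a linear extension, if a vertex v receives color k with k ≥ 2, then there exist elements u₁, ..., u_{k-1} each covered by v such that u_i received color i for each i = 1, ..., k-1, and the down-sets T(u₁), ..., T(u_{k-1}) are pairwise disjoint. -/

import Mathlib

/-- A poset is uniquely generated if every comparable pair `x < y` is connected
by a unique covering chain. -/
def UniquelyGenerated (α : Type*) [PartialOrder α] : Prop :=
  ∀ x y : α, x < y →
    ∃! l : List α, List.Chain (· ⋖ ·) x l ∧ l.getLast? = some y

/-- `c` is the greedy coloring along a linear extension: each vertex `v` gets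
the least positive integer not used on the set of elements covered by `v`. -/
def IsGreedyColoring (α : Type*) [PartialOrder α] (c : α → ℕ) : Prop :=
  ∀ v : α, c v = sInf {k : ℕ | 1 ≤ k ∧ ∀ u : α, u ⋖ v → c u ≠ k}

/-!
Every colour `i < c v` occurs on some element covered by `v`, by minimality of the greedy choice.
Two distinct elements `a, b` covered by `v` have disjoint down-sets: a common lower bound `w`
would give the two covering chains `w ⋖ ⋯ ⋖ a ⋖ v` and `w ⋖ ⋯ ⋖ b ⋖ v`, which must coincide in a
uniquely generated poset, so `a = b`. Elements of different colours are distinct.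
-/

lemma IsGreedyColoring.exists_covBy_eq {α : Type*} [PartialOrder α] {c : α → ℕ}
    (hc : IsGreedyColoring α c) {v : α} {i : ℕ} (hi : 1 ≤ i) (hiv : i < c v) :
    ∃ u, u ⋖ v ∧ c u = i := by
  by_contra! h
  exact (Nat.sInf_le (show i ∈ {k | 1 ≤ k ∧ ∀ u, u ⋖ v → c u ≠ k} from ⟨hi, h⟩)).not_gt
    (hc v ▸ hiv)

lemma List.exists_isChain_covBy_of_le {α : Type*} [PartialOrder α] [LocallyFiniteOrder α]
    {a b : α} (hab : a ≤ b) :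
    ∃ l : List α, (a :: l).IsChain (· ⋖ ·) ∧ (a :: l).getLast? = some b := by
  obtain ⟨l, hl, hlast⟩ :=
    exists_isChain_cons_of_relationReflTransGen (le_iff_reflTransGen_covBy.mp hab)
  exact ⟨l, hl, by rw [getLast?_eq_some_getLast (cons_ne_nil a l), hlast]⟩

namespace UniquelyGenerated

variable {α : Type*} [PartialOrder α] [LocallyFiniteOrder α]

lemma eq_of_covBy_of_le (hug : UniquelyGenerated α) {w a b v : α}
    (hav : a ⋖ v) (hbv : b ⋖ v) (hwa : w ≤ a) (hwb : w ≤ b) : a = b := by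
  obtain ⟨la, hla, hla_last⟩ := List.exists_isChain_covBy_of_le hwa
  obtain ⟨lb, hlb, hlb_last⟩ := List.exists_isChain_covBy_of_le hwb
  have extend : ∀ {l : List α} {x : α}, (w :: l).IsChain (· ⋖ ·) →
      (w :: l).getLast? = some x → x ⋖ v → (w :: (l ++ [v])).IsChain (· ⋖ ·) :=
    fun hl hlast hxv => hl.append (.singleton v) (by simp [hlast, hxv])
  have hl : la ++ [v] = lb ++ [v] :=
    (hug w v (hwa.trans_lt hav.lt)).unique
      ⟨extend hla hla_last hav, List.getLast?_concat⟩
      ⟨extend hlb hlb_last hbv, List.getLast?_concat⟩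
  rw [List.append_cancel_right hl, hlb_last] at hla_last
  exact (Option.some.inj hla_last).symm

lemma disjoint_Iic_of_covBy (hug : UniquelyGenerated α) {a b v : α}
    (hav : a ⋖ v) (hbv : b ⋖ v) (hab : a ≠ b) : Disjoint (Set.Iic a) (Set.Iic b) :=
  Set.disjoint_left.mpr fun _ hwa hwb => hab (hug.eq_of_covBy_of_le hav hbv hwa hwb)

end UniquelyGenerated

theorem stmt3_general (α : Type*) [Fintype α] [PartialOrder α]
    (hug : UniquelyGenerated α) (c : α → ℕ) (hc : IsGreedyColoring α c)
    (v : α) (k : ℕ) (hk : c v = k) :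
    ∃ u : Fin (k - 1) → α,
      (∀ i, u i ⋖ v ∧ c (u i) = (i : ℕ) + 1) ∧
      (∀ i j, i ≠ j →
        Disjoint {w : α | w ≤ u i} {w : α | w ≤ u j}) := by
  classical
  let := Fintype.toLocallyFiniteOrder (α := α)
  choose u hu_cov hu_color using fun i : Fin (k - 1) =>
    hc.exists_covBy_eq (v := v) (Nat.le_add_left 1 i) (by have := i.2; omega)
  refine ⟨u, fun i => ⟨hu_cov i, hu_color i⟩, fun i j hij => ?_⟩
  refine hug.disjoint_Iic_of_covBy (hu_cov i) (hu_cov j) fun h => hij ?_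
  have := hu_color i
  rw [h, hu_color j] at this
  exact Fin.ext (by omega)

/-- If a vertex `v` receives color `k ≥ 2` in the greedy coloring, then there
are elements `u₁, …, u_{k-1}` covered by `v`, with `u_i` colored `i`, whose
down-sets `T(u_i)` are pairwise disjoint. -/
theorem stmt3 (α : Type*) [Fintype α] [PartialOrder α]
    (hug : UniquelyGenerated α) (c : α → ℕ) (hc : IsGreedyColoring α c)
    (v : α) (k : ℕ) (hk : c v = k) (hk2 : 2 ≤ k) :
    ∃ u : Fin (k - 1) → α,
      (∀ i, u i ⋖ v ∧ c (u i) = (i : ℕ) + 1) ∧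
      (∀ i j, i ≠ j →
        Disjoint {w : α | w ≤ u i} {w : α | w ≤ u j}) :=
  stmt3_general α hug c hc v k hk
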